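/- arXiv:1701.07639 — 2 statements merged into one kernel-verified Lean document; each statement's English description precedes it below -/
import Mathlib

section
/- Fix an integer t ≥ 3. For every even integer d ≥ 2 there exists a d-regular simple graph G such that χ_t(G) ≥ d^t/2^t and χ'_{t+1}(G) ≥ d^{t+1}/2^t. Moreover, G can be taken to be bipartite if t is even, and to contain no odd cycle of length less than t if t is odd. -/
/-!
A vertex is a word `x : ZMod t → α` written around a cycle together with a cursor `i : ZMod t`;
an edge moves the cursor one step and overwrites the letter it moves onto. Every vertex has
`|α|` forward and `|α|` backward neighbours, so the graph is `2|α|`-regular. Since `t` forward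
moves rewrite every letter, the `|α|^t` vertices with cursor `0` are pairwise at distance at most
`t`, and the `2|α|^{t+1}` edges at these vertices (each has only one end with cursor `0`) are
pairwise at distance at most `t + 1` in the line graph. The cursor moves by `±1` along every
edge: for even `t` its parity is a proper `2`-colouring, and a closed walk of odd length cannot
have net displacement `0`, so it winds around `ZMod t` and has length at least `t`.
-/

/-- The `t`-th power of a simple graph `G`: two distinct vertices are adjacent iff
there is a path with at most `t` edges between them in `G`. -/
def SimpleGraph.power {V : Type*} (G : SimpleGraph V) (t : ℕ) : SimpleGraph V where
  Adj u v := u ≠ v ∧ ∃ p : G.Walk u v, p.IsPath ∧ p.length ≤ t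
  symm := by
    constructor
    rintro u v ⟨h, p, hp, hl⟩
    exact ⟨h.symm, p.reverse, hp.reverse, by simpa using hl⟩
  loopless := by constructor; rintro v ⟨h, -⟩; exact h rfl

/-- The distance-`t` chromatic number `χ_t(G)`. -/
noncomputable def distChromNum {V : Type*} (G : SimpleGraph V) (t : ℕ) : ℕ∞ :=
  (G.power t).chromaticNumber

/-- The distance-`t` chromatic index `χ'_t(G)`. -/
noncomputable def distChromIndex {V : Type*} (G : SimpleGraph V) (t : ℕ) : ℕ∞ :=
  ((G.lineGraph).power t).chromaticNumber

/-- `G` contains no cycle of length `ℓ` as a subgraph. -/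
def CycleFree {V : Type*} (G : SimpleGraph V) (ℓ : ℕ) : Prop :=
  ∀ (v : V) (p : G.Walk v v), p.IsCycle → p.length ≠ ℓ

/-- `G` is bipartite: the vertex set can be partitioned into two independent sets. -/
def BipartiteGraph {V : Type*} (G : SimpleGraph V) : Prop :=
  ∃ s : Set V, ∀ u v : V, G.Adj u v → (u ∈ s ↔ v ∉ s)

lemma ZMod.natCast_ne_zero_of_lt {n t : ℕ} (hn : 0 < n) (ht : n < t) : (n : ZMod t) ≠ 0 := by
  rw [Ne, ZMod.natCast_eq_zero_iff]
  exact fun h => absurd (Nat.le_of_dvd hn h) (by omega)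

namespace SimpleGraph

variable {V : Type*} {G : SimpleGraph V}

lemma power_adj_of_walk {t : ℕ} {u v : V} (huv : u ≠ v) (p : G.Walk u v) (hp : p.length ≤ t) :
    (G.power t).Adj u v := by
  classical exact ⟨huv, p.bypass, p.bypass_isPath, p.length_bypass_le_length.trans hp⟩

lemma Walk.exists_lineGraph_walk {u v : V} (p : G.Walk u v) {e f : G.edgeSet} :
    u ∈ (e : Sym2 V) → v ∈ (f : Sym2 V) →
      ∃ q : G.lineGraph.Walk e f, q.length ≤ p.length + 1 := by
  induction p generalizing e with
  | nil =>
    intro he hf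
    by_cases hef : e = f
    · subst hef
      exact ⟨.nil, by simp⟩
    · exact ⟨.cons ⟨hef, _, he, hf⟩ .nil, le_rfl⟩
  | @cons u w v h p ih =>
    intro he hf
    let g : G.edgeSet := ⟨s(u, w), h⟩
    obtain ⟨q, hq⟩ := ih (e := g) (Sym2.mem_mk_right u w) hf
    by_cases heg : e = g
    · subst heg
      exact ⟨q, by simp only [Walk.length_cons]; omega⟩
    · exact ⟨.cons ⟨heg, u, he, Sym2.mem_mk_left u w⟩ q, Nat.succ_le_succ hq⟩

lemma lineGraph_power_adj_of_walk {t : ℕ} {e f : G.edgeSet} (hef : e ≠ f) {u v : V}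
    (hu : u ∈ (e : Sym2 V)) (hv : v ∈ (f : Sym2 V)) (p : G.Walk u v) (hp : p.length ≤ t) :
    (G.lineGraph.power (t + 1)).Adj e f := by
  obtain ⟨q, hq⟩ := p.exists_lineGraph_walk hu hv
  exact power_adj_of_walk hef q (by omega)

end SimpleGraph

namespace CursorGraph

open SimpleGraph Function

variable {t : ℕ} {α : Type*}

def push (v : (ZMod t → α) × ZMod t) (c : α) : (ZMod t → α) × ZMod t :=
  (update v.1 (v.2 + 1) c, v.2 + 1)

def pull (v : (ZMod t → α) × ZMod t) (c : α) : (ZMod t → α) × ZMod t :=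
  (update v.1 v.2 c, v.2 - 1)

lemma push_pull (v : (ZMod t → α) × ZMod t) (c : α) : push (pull v c) (v.1 v.2) = v := by
  simp [push, pull]

lemma pull_push (v : (ZMod t → α) × ZMod t) (c : α) : pull (push v c) (v.1 (v.2 + 1)) = v := by
  simp [push, pull]

variable (t α) in
def graph : SimpleGraph ((ZMod t → α) × ZMod t) :=
  SimpleGraph.fromRel fun u v => ∃ c, push u c = v

def nbr (v : (ZMod t → α) × ZMod t) : α ⊕ α → (ZMod t → α) × ZMod t :=
  Sum.elim (push v) (pull v)

lemma snd_eq_of_adj {u v : (ZMod t → α) × ZMod t} (h : (graph t α).Adj u v) :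
    v.2 = u.2 + 1 ∨ u.2 = v.2 + 1 := by
  obtain ⟨-, ⟨c, rfl⟩ | ⟨c, rfl⟩⟩ := h
  · exact .inl rfl
  · exact .inr rfl

lemma snd_ne_of_adj (ht : 1 < t) {u v : (ZMod t → α) × ZMod t} (h : (graph t α).Adj u v) :
    u.2 ≠ v.2 := by
  have h1 : ((1 : ℕ) : ZMod t) ≠ 0 := ZMod.natCast_ne_zero_of_lt one_pos ht
  intro h'
  rcases snd_eq_of_adj h with h | h <;> rw [h'] at h <;> exact h1 (by linear_combination -h)

lemma adj_nbr (ht : 1 < t) (v : (ZMod t → α) × ZMod t) (s : α ⊕ α) :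
    (graph t α).Adj v (nbr v s) := by
  have h1 : ((1 : ℕ) : ZMod t) ≠ 0 := ZMod.natCast_ne_zero_of_lt one_pos ht
  rcases s with c | c
  · refine ⟨ne_of_apply_ne Prod.snd ?_, .inl ⟨c, rfl⟩⟩
    intro (h : v.2 = v.2 + 1)
    exact h1 (by linear_combination -h)
  · refine ⟨ne_of_apply_ne Prod.snd ?_, .inr ⟨v.1 v.2, push_pull v c⟩⟩
    intro (h : v.2 = v.2 - 1)
    exact h1 (by linear_combination h)

lemma adj_update (ht : 1 < t) (x : ZMod t → α) (i : ZMod t) (c : α) :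
    (graph t α).Adj (x, i) (update x (i + 1) c, i + 1) :=
  adj_nbr ht (x, i) (.inl c)

lemma nbr_injective (ht : 2 < t) (v : (ZMod t → α) × ZMod t) : Injective (nbr v) := by
  have h2 : ((2 : ℕ) : ZMod t) ≠ 0 := ZMod.natCast_ne_zero_of_lt two_pos ht
  rintro (c | c) (c' | c') h <;> simp only [nbr, Sum.elim_inl, Sum.elim_inr, push, pull] at h
  · simpa using congrFun (congrArg Prod.fst h) (v.2 + 1)
  · exact absurd (by linear_combination congrArg Prod.snd h) h2
  · exact absurd (by linear_combination -congrArg Prod.snd h) h2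
  · simpa using congrFun (congrArg Prod.fst h) v.2

lemma neighborSet_eq_range (ht : 1 < t) (v : (ZMod t → α) × ZMod t) :
    (graph t α).neighborSet v = Set.range (nbr v) := by
  ext w
  constructor
  · rintro ⟨-, ⟨c, rfl⟩ | ⟨c, rfl⟩⟩
    · exact ⟨.inl c, rfl⟩
    · exact ⟨.inr (w.1 (w.2 + 1)), pull_push w c⟩
  · rintro ⟨s, rfl⟩
    exact adj_nbr ht v s

lemma ncard_neighborSet (ht : 2 < t) [Finite α] (v : (ZMod t → α) × ZMod t) :
    ((graph t α).neighborSet v).ncard = Nat.card α + Nat.card α := by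
  rw [neighborSet_eq_range (by omega), Set.ncard_range_of_injective (nbr_injective ht v),
    Nat.card_sum]

lemma exists_walk_of_forall_ne (ht : 1 < t) (n : ℕ) (i : ZMod t) (x y : ZMod t → α)
    (h : ∀ r, x r ≠ y r → ∃ m < n, r = i + 1 + m) :
    ∃ w : (graph t α).Walk (x, i) (y, i + n), w.length = n := by
  induction n generalizing i x with
  | zero =>
    obtain rfl : x = y := funext fun r => by_contra fun hr => by
      obtain ⟨m, hm, -⟩ := h r hr
      omega
    exact ⟨Walk.nil.copy rfl (by simp), by simp⟩
  | succ n ih =>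
    have hx : ∀ r, update x (i + 1) (y (i + 1)) r ≠ y r → ∃ m < n, r = i + 1 + 1 + m := by
      intro r hr
      by_cases hri : r = i + 1
      · subst hri
        simp at hr
      · obtain ⟨_ | m, hm, rfl⟩ := h r (by simpa [hri] using hr)
        · simp at hri
        · exact ⟨m, by omega, by push_cast; ring⟩
    obtain ⟨w, hw⟩ := ih (i + 1) _ hx
    exact ⟨(Walk.cons (adj_update ht x i (y (i + 1))) w).copy rfl (by push_cast; ring_nf),
      by rw [Walk.length_copy, Walk.length_cons, hw]⟩

lemma exists_walk_length_eq (ht : 1 < t) (x y : ZMod t → α) (i : ZMod t) :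
    ∃ w : (graph t α).Walk (x, i) (y, i), w.length = t := by
  have : NeZero t := ⟨by omega⟩
  have h := exists_walk_of_forall_ne ht t i x y fun r _ =>
    ⟨(r - i - 1).val, ZMod.val_lt _, by rw [ZMod.natCast_zmod_val]; ring⟩
  rwa [ZMod.natCast_self, add_zero] at h

lemma exists_snd_eq_add_sub {u v : (ZMod t → α) × ZMod t} (p : (graph t α).Walk u v) :
    ∃ a b : ℕ, a + b = p.length ∧ v.2 = u.2 + a - b := by
  induction p with
  | nil => exact ⟨0, 0, rfl, by simp⟩
  | cons h p ih =>
    obtain ⟨a, b, hab, hv⟩ := ih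
    rcases snd_eq_of_adj h with h | h
    · exact ⟨a + 1, b, by simp; omega, by rw [hv, h]; push_cast; ring⟩
    · exact ⟨a, b + 1, by simp; omega, by rw [hv, h]; push_cast; ring⟩

lemma le_length_of_odd {v : (ZMod t → α) × ZMod t} (p : (graph t α).Walk v v)
    (hp : Odd p.length) : t ≤ p.length := by
  obtain ⟨a, b, hab, hv⟩ := exists_snd_eq_add_sub p
  have hdvd : (t : ℤ) ∣ (a : ℤ) - b := by
    rw [← ZMod.intCast_zmod_eq_zero_iff_dvd]
    push_cast
    linear_combination -hv
  have hne : (a : ℤ) - b ≠ 0 := by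
    obtain ⟨m, hm⟩ := hp
    omega
  have := Nat.le_of_dvd (Int.natAbs_pos.mpr hne) (Int.natCast_dvd.mp hdvd)
  omega

lemma bipartite_of_even (h : Even t) : BipartiteGraph (graph t α) := by
  let φ := ZMod.castHom h.two_dvd (ZMod 2)
  refine ⟨{v | φ v.2 = 0}, fun u v huv => ?_⟩
  rcases snd_eq_of_adj huv with h | h <;> simp only [Set.mem_ofPred_eq, h, map_add, map_one] <;>
    generalize φ _ = a <;> revert a <;> decide

lemma pow_card_le_distChromNum (ht : 1 < t) [Finite α] :
    Nat.card α ^ t ≤ (distChromNum (graph t α) t).toNat := by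
  have : NeZero t := ⟨by omega⟩
  have := ((graph t α).power t).colorable_chromaticNumber_of_fintype.card_le_of_pairwise_adj
    (fun x : ZMod t → α => (x, (0 : ZMod t))) fun x y hxy => by
      obtain ⟨w, hw⟩ := exists_walk_length_eq ht x y 0
      exact power_adj_of_walk (by simpa using hxy) w hw.le
  simpa [distChromNum, Nat.card_fun] using this

lemma pow_card_mul_le_distChromIndex (ht : 2 < t) [Finite α] :
    Nat.card α ^ t * (Nat.card α + Nat.card α) ≤
      (distChromIndex (graph t α) (t + 1)).toNat := by
  have : NeZero t := ⟨by omega⟩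
  let edge : (ZMod t → α) × (α ⊕ α) → (graph t α).edgeSet := fun p =>
    ⟨s((p.1, 0), nbr (p.1, 0) p.2), adj_nbr (by omega) _ _⟩
  have hedge : Injective edge := by
    rintro ⟨x, s⟩ ⟨x', s'⟩ h
    rcases Sym2.eq_iff.mp (Subtype.ext_iff.mp h) with ⟨hx, hs⟩ | ⟨hx, -⟩
    · obtain rfl : x = x' := congrArg Prod.fst hx
      exact Prod.ext rfl (nbr_injective ht (x, 0) hs)
    · have hne := snd_ne_of_adj (by omega) (adj_nbr (by omega) (x', 0) s')
      exact (hne (congrArg Prod.snd hx :)).elim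
  have := (graph t α).lineGraph.power (t + 1) |>.colorable_chromaticNumber_of_fintype
    |>.card_le_of_pairwise_adj edge fun p q hpq => by
      obtain ⟨w, hw⟩ := exists_walk_length_eq (by omega) p.1 q.1 0
      exact lineGraph_power_adj_of_walk (hedge.ne hpq) (Sym2.mem_mk_left _ _)
        (Sym2.mem_mk_left _ _) w hw.le
  simpa [distChromIndex, Nat.card_fun, Nat.card_sum] using this

end CursorGraph

theorem regular_graph_with_large_power_clique_general
    (t : ℕ) (ht : 3 ≤ t) (d : ℕ) (hdEven : Even d) :
    ∃ (V : Type) (_ : Fintype V) (G : SimpleGraph V),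
      (∀ v : V, (G.neighborSet v).ncard = d) ∧
      (d : ℝ) ^ t / 2 ^ t ≤ ((distChromNum G t).toNat : ℝ) ∧
      (d : ℝ) ^ (t + 1) / 2 ^ t ≤ ((distChromIndex G (t + 1)).toNat : ℝ) ∧
      (Even t → BipartiteGraph G) ∧
      (Odd t → ∀ (v : V) (p : G.Walk v v), p.IsCycle → Odd p.length → t ≤ p.length) := by
  obtain ⟨k, rfl⟩ := hdEven
  have : NeZero t := ⟨by omega⟩
  have hχ := CursorGraph.pow_card_le_distChromNum (α := Fin k) (by omega : 1 < t)
  have hχ' := CursorGraph.pow_card_mul_le_distChromIndex (α := Fin k) (by omega : 2 < t)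
  rw [Nat.card_eq_fintype_card, Fintype.card_fin] at hχ hχ'
  refine ⟨_, inferInstance, CursorGraph.graph t (Fin k), fun v => ?_, ?_, ?_,
    CursorGraph.bipartite_of_even, fun _ _ p _ => CursorGraph.le_length_of_odd p⟩
  · simpa using CursorGraph.ncard_neighborSet (by omega : 2 < t) v
  · calc ((k + k : ℕ) : ℝ) ^ t / 2 ^ t = (k ^ t : ℕ) := by push_cast; field_simp; ring
      _ ≤ _ := by exact_mod_cast hχ
  · calc ((k + k : ℕ) : ℝ) ^ (t + 1) / 2 ^ t = (k ^ t * (k + k) : ℕ) := by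
          push_cast; field_simp; ring
      _ ≤ _ := by exact_mod_cast hχ'

/-- Proposition 4: for fixed `t ≥ 3` and every even `d ≥ 2` there is a `d`-regular graph
`G` with `χ_t(G) ≥ d^t/2^t` and `χ'_{t+1}(G) ≥ d^{t+1}/2^t`; moreover `G` is bipartite
if `t` is even, and has no odd cycle of length less than `t` if `t` is odd. -/
theorem regular_graph_with_large_power_clique
    (t : ℕ) (ht : 3 ≤ t) (d : ℕ) (hd : 2 ≤ d) (hdEven : Even d) :
    ∃ (V : Type) (_ : Fintype V) (G : SimpleGraph V),
      (∀ v : V, (G.neighborSet v).ncard = d) ∧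
      (d : ℝ) ^ t / 2 ^ t ≤ ((distChromNum G t).toNat : ℝ) ∧
      (d : ℝ) ^ (t + 1) / 2 ^ t ≤ ((distChromIndex G (t + 1)).toNat : ℝ) ∧
      (Even t → BipartiteGraph G) ∧
      (Odd t → ∀ (v : V) (p : G.Walk v v), p.IsCycle → Odd p.length → t ≤ p.length) :=
  regular_graph_with_large_power_clique_general t ht d hdEven
end

section
/- Let d be an integer such that d − 1 is a prime power. Then there exists a d-regular bipartite simple graph Q of girth 8 such that χ'_4(Q) = d⁴ − 2d³ + 2d². -/
/-!
Take `Q` to be the point–line incidence graph of the symplectic quadrangle `W(q)`, `q = d - 1`: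
the points and the totally isotropic lines of a nondegenerate alternating form on `𝔽_q⁴`.
Counting vectors, every line has `q + 1` points, every point `P` is on `q + 1` lines (the planes
between `P` and the hyperplane `P^⊥`), and there are `q³ + q² + q + 1` points. Two points lie on
at most one line and three pairwise collinear points are collinear, so `Q` has no 4- or 6-cycles,
while a coordinate frame spans an 8-cycle. Every point is collinear with some point of every
line, so any two edges of `Q` are at distance at most 4 in the line graph: the fourth power of the
line graph is complete and `χ'_4(Q)` is the number of edges, `(q + 1)(q³ + q² + q + 1)`.
-/

open Module Submodule Finset

theorem Submodule.sup_eq_of_finrank_eq_one {K V : Type*} [Field K] [AddCommGroup V] [Module K V]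
    [FiniteDimensional K V] {P Q L : Submodule K V} (hP : finrank K P = 1) (hQ : finrank K Q = 1)
    (hPQ : P ≠ Q) (hPL : P ≤ L) (hQL : Q ≤ L) (hL : finrank K L = 2) : P ⊔ Q = L := by
  have hlt : P < P ⊔ Q := lt_of_le_of_ne le_sup_left fun h =>
    hPQ (eq_of_le_of_finrank_le (h ▸ le_sup_right) (by omega)).symm
  exact eq_of_le_of_finrank_le (sup_le hPL hQL) (by have := finrank_lt_finrank_of_lt hlt; omega)

section Counting

variable {K V : Type*} [Field K] [AddCommGroup V] [Module K V] [Finite V]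

theorem Submodule.ncard_coe_sdiff {A C : Submodule K V} (h : A ≤ C) :
    ((C : Set V) \ A).ncard = Nat.card K ^ finrank K C - Nat.card K ^ finrank K A := by
  rw [Set.ncard_sdiff h, ← Nat.card_coe_set_eq, ← Nat.card_coe_set_eq, SetLike.coe_sort_coe,
    SetLike.coe_sort_coe, natCard_eq_pow_finrank (K := K) (V := C),
    natCard_eq_pow_finrank (K := K) (V := A)]

/-- Double counting: `u ↦ A ⊔ K ∙ u` maps `S \ A` onto these `W`, with fibre `W \ A` over `W`. -/
theorem Submodule.ncard_covers_mul {A S : Submodule K V} (hAS : A ≤ S) :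
    {W : Submodule K V | A ≤ W ∧ W ≤ S ∧ finrank K W = finrank K A + 1}.ncard *
        (Nat.card K ^ (finrank K A + 1) - Nat.card K ^ finrank K A) =
      Nat.card K ^ finrank K S - Nat.card K ^ finrank K A := by
  classical
  have := Fintype.ofFinite V
  set T := {W : Submodule K V | A ≤ W ∧ W ≤ S ∧ finrank K W = finrank K A + 1}
  have hcover {W : Submodule K V} (hW : W ∈ T) {u : V} (hu : u ∉ A) :
      A ⊔ K ∙ u = W ↔ u ∈ W := by
    refine ⟨fun h => h ▸ mem_sup_right (mem_span_singleton_self u), fun huW => ?_⟩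
    refine eq_of_le_of_finrank_le (sup_le hW.1 ((span_singleton_le_iff_mem u W).mpr huW)) ?_
    rw [hW.2.2, finrank_sup_span_singleton hu]
  have hmaps : Set.MapsTo (fun u => A ⊔ K ∙ u) ((S : Set V) \ A).toFinset T.toFinset := by
    intro u hu
    simp only [Set.coe_toFinset, Set.mem_sdiff, SetLike.mem_coe] at hu ⊢
    exact ⟨le_sup_left, sup_le hAS ((span_singleton_le_iff_mem u S).mpr hu.1),
      finrank_sup_span_singleton hu.2⟩
  have hfiber : ∀ W ∈ T.toFinset, #{u ∈ ((S : Set V) \ A).toFinset | A ⊔ K ∙ u = W} =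
      Nat.card K ^ (finrank K A + 1) - Nat.card K ^ finrank K A := by
    intro W hW
    rw [Set.mem_toFinset] at hW
    rw [← hW.2.2, ← ncard_coe_sdiff hW.1, Set.ncard_eq_toFinset_card']
    congr 1
    ext u
    simp only [mem_filter, Set.mem_toFinset, Set.mem_sdiff, SetLike.mem_coe]
    constructor
    · rintro ⟨⟨-, hu⟩, huW⟩
      exact ⟨(hcover hW hu).mp huW, hu⟩
    · rintro ⟨huW, hu⟩
      exact ⟨⟨hW.2.1 huW, hu⟩, (hcover hW hu).mpr huW⟩
  rw [← ncard_coe_sdiff hAS, Set.ncard_eq_toFinset_card' ((S : Set V) \ A),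
    card_eq_sum_card_fiberwise hmaps, sum_congr rfl hfiber, sum_const, smul_eq_mul,
    Set.ncard_eq_toFinset_card']

theorem Submodule.ncard_covers [Finite K] {A S : Submodule K V} (hAS : A ≤ S) :
    {W : Submodule K V | A ≤ W ∧ W ≤ S ∧ finrank K W = finrank K A + 1}.ncard =
      ∑ i ∈ range (finrank K S - finrank K A), Nat.card K ^ i := by
  set q := Nat.card K
  have hq : 1 < q := Finite.one_lt_card
  obtain ⟨m, hm⟩ := Nat.exists_eq_add_of_le (finrank_mono hAS)
  have key := ncard_covers_mul hAS
  rw [hm, pow_add q (finrank K A) m, pow_succ, ← Nat.mul_sub_one, ← Nat.mul_sub_one,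
    ← geom_sum_mul_of_one_le hq.le m, mul_left_comm] at key
  rw [hm, Nat.add_sub_cancel_left]
  exact Nat.eq_of_mul_eq_mul_right (Nat.sub_pos_of_lt hq)
    (Nat.eq_of_mul_eq_mul_left (by positivity) key)

end Counting

namespace LinearMap.BilinForm

variable {K V : Type*} [Field K] [AddCommGroup V] [Module K V] {B : LinearMap.BilinForm K V}

theorem orthogonal_sup (U W : Submodule K V) :
    B.orthogonal (U ⊔ W) = B.orthogonal U ⊓ B.orthogonal W := by
  refine le_antisymm (le_inf (orthogonal_le le_sup_left) (orthogonal_le le_sup_right)) ?_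
  rintro v ⟨hU, hW⟩ x hx
  obtain ⟨u, hu, w, hw, rfl⟩ := mem_sup.mp hx
  rw [map_add, LinearMap.add_apply, hU u hu, hW w hw, add_zero]

theorem sup_le_orthogonal_sup (hB : B.IsRefl) {U W : Submodule K V}
    (hU : U ≤ B.orthogonal U) (hW : W ≤ B.orthogonal W) (hUW : W ≤ B.orthogonal U) :
    U ⊔ W ≤ B.orthogonal (U ⊔ W) := by
  have hWU : U ≤ B.orthogonal W := fun u hu w hw => hB _ _ (hUW hw u hu)
  rw [orthogonal_sup]
  exact sup_le (le_inf hU hWU) (le_inf hUW hW)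

theorem two_mul_finrank_le_of_le_orthogonal [FiniteDimensional K V] (hB : B.Nondegenerate)
    {W : Submodule K V} (hW : W ≤ B.orthogonal W) : 2 * finrank K W ≤ finrank K V := by
  have := finrank_mono hW
  rw [finrank_orthogonal hB] at this
  have := W.finrank_le
  omega

theorem orthogonal_inf_ne_bot [FiniteDimensional K V] (hB : B.IsRefl) {P L : Submodule K V}
    (hP : finrank K P = 1) (hL : 2 ≤ finrank K L) : B.orthogonal P ⊓ L ≠ ⊥ := by
  intro h
  have h1 := finrank_add_finrank_orthogonal hB P
  have h2 := finrank_sup_add_finrank_inf_eq (B.orthogonal P) L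
  have h3 := (B.orthogonal P ⊔ L).finrank_le
  rw [h, finrank_bot] at h2
  omega

theorem IsAlt.span_singleton_le_orthogonal (hB : B.IsAlt) (u : V) :
    K ∙ u ≤ B.orthogonal (K ∙ u) := by
  intro x hx y hy
  obtain ⟨a, rfl⟩ := mem_span_singleton.mp hx
  obtain ⟨b, rfl⟩ := mem_span_singleton.mp hy
  simp [hB u]

theorem IsAlt.le_orthogonal_of_finrank_eq_one (hB : B.IsAlt) {W : Submodule K V}
    (hW : finrank K W = 1) : W ≤ B.orthogonal W := by
  obtain ⟨u, hu, hu0⟩ := W.exists_mem_ne_zero_of_ne_bot fun h => by subst h; simp at hW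
  rw [eq_span_singleton_of_mem_of_finrank_eq_one hW hu hu0]
  exact hB.span_singleton_le_orthogonal u

theorem IsAlt.sup_span_singleton_le_orthogonal (hB : B.IsAlt) {P : Submodule K V} {u : V}
    (hP : P ≤ B.orthogonal P) (hu : u ∈ B.orthogonal P) :
    P ⊔ K ∙ u ≤ B.orthogonal (P ⊔ K ∙ u) :=
  sup_le_orthogonal_sup hB.isRefl hP (hB.span_singleton_le_orthogonal u)
    ((span_singleton_le_iff_mem u _).mpr hu)

end LinearMap.BilinForm

namespace SimpleGraph

variable {V : Type*} {G : SimpleGraph V}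

theorem Coloring.bipartiteGraph (c : G.Coloring Bool) : BipartiteGraph G :=
  ⟨{v | c v}, fun u v h => by
    have := c.valid h
    cases hu : c u <;> cases hv : c v <;> simp_all⟩

theorem cycleGraph_adj_add_one {n : ℕ} (i : Fin (n + 2)) : (cycleGraph (n + 2)).Adj i (i + 1) :=
  cycleGraph_adj.mpr (Or.inr (add_sub_cancel_left i 1))

theorem power_adj_iff_edist {t : ℕ} {u v : V} :
    (G.power t).Adj u v ↔ u ≠ v ∧ G.edist u v ≤ t := by
  classical
  refine ⟨fun ⟨huv, p, _, hp⟩ => ⟨huv, (edist_le p).trans (by exact_mod_cast hp)⟩,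
    fun ⟨huv, h⟩ => ?_⟩
  obtain ⟨p, hp⟩ := exists_walk_of_edist_ne_top (h.trans_lt (ENat.natCast_lt_top t)).ne
  rw [← hp] at h
  exact ⟨huv, p.bypass, p.bypass_isPath, p.length_bypass_le_length.trans (by exact_mod_cast h)⟩

theorem lineGraph_edist_le_one {e f : G.edgeSet} {v : V} (he : v ∈ (e : Sym2 V))
    (hf : v ∈ (f : Sym2 V)) : G.lineGraph.edist e f ≤ 1 := by
  rw [edist_le_one_iff_adj_or_eq, or_iff_not_imp_right]
  exact fun hne => lineGraph_adj_iff_exists.mpr ⟨hne, v, he, hf⟩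

theorem lineGraph_edist_le_length_add_one {x y : V} (p : G.Walk x y) {e f : G.edgeSet}
    (hx : x ∈ (e : Sym2 V)) (hy : y ∈ (f : Sym2 V)) :
    G.lineGraph.edist e f ≤ p.length + 1 := by
  induction p generalizing e with
  | nil => simpa using lineGraph_edist_le_one hx hy
  | @cons x w y h q ih =>
    let g : G.edgeSet := ⟨s(x, w), G.mem_edgeSet.mpr h⟩
    calc G.lineGraph.edist e f ≤ G.lineGraph.edist e g + G.lineGraph.edist g f :=
          SimpleGraph.edist_triangle
      _ ≤ 1 + (q.length + 1) :=
          add_le_add (lineGraph_edist_le_one hx (Sym2.mem_mk_left x w))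
            (ih (e := g) (Sym2.mem_mk_right x w) hy)
      _ = (q.cons h).length + 1 := by push_cast [Walk.length_cons]; ring

theorem lineGraph_edist_le_edist_add_one {x y : V} {e f : G.edgeSet}
    (hx : x ∈ (e : Sym2 V)) (hy : y ∈ (f : Sym2 V)) :
    G.lineGraph.edist e f ≤ G.edist x y + 1 := by
  by_cases h : G.edist x y = ⊤
  · simp [h]
  · obtain ⟨p, hp⟩ := exists_walk_of_edist_ne_top h
    exact hp ▸ lineGraph_edist_le_length_add_one p hx hy

end SimpleGraph

namespace LinearMap.BilinForm

open SimpleGraph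

variable {K V : Type*} [Field K] [AddCommGroup V] [Module K V]

/-- For a nondegenerate alternating form on `K⁴` these are the points and the lines of the
symplectic quadrangle `W(3, K)`, and `polarGraph` is its point–line incidence graph. -/
abbrev PolarVertex (B : LinearMap.BilinForm K V) : Type _ :=
  {W : Submodule K V // W ≤ B.orthogonal W ∧ (finrank K W = 1 ∨ finrank K W = 2)}

def polarGraph (B : LinearMap.BilinForm K V) : SimpleGraph B.PolarVertex :=
  SimpleGraph.fromRel fun a b => a.1 < b.1

variable {B : LinearMap.BilinForm K V}

theorem polarGraph_adj_of_lt {a b : B.PolarVertex} (h : a.1 < b.1) : B.polarGraph.Adj a b :=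
  (fromRel_adj _ a b).mpr ⟨fun hab => h.ne (congrArg Subtype.val hab), Or.inl h⟩

theorem polarGraph_adj_of_le {a b : B.PolarVertex} (ha : finrank K a.1 = 1)
    (hb : finrank K b.1 = 2) (hab : a.1 ≤ b.1) : B.polarGraph.Adj a b :=
  polarGraph_adj_of_lt (lt_of_le_of_ne hab fun h => by rw [h] at ha; omega)

variable [FiniteDimensional K V]

namespace PolarVertex

theorem finrank_eq_of_lt {a b : B.PolarVertex} (h : a.1 < b.1) :
    finrank K a.1 = 1 ∧ finrank K b.1 = 2 := by
  have := finrank_lt_finrank_of_lt h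
  rcases a.2.2 with ha | ha <;> rcases b.2.2 with hb | hb <;> omega

theorem le_of_adj_of_finrank_eq_one {a b : B.PolarVertex} (h : B.polarGraph.Adj a b)
    (ha : finrank K a.1 = 1) : finrank K b.1 = 2 ∧ a.1 ≤ b.1 := by
  rcases ((fromRel_adj _ a b).mp h).2 with hab | hba
  · exact ⟨(finrank_eq_of_lt hab).2, hab.le⟩
  · have := (finrank_eq_of_lt hba).2
    omega

theorem le_of_adj_of_finrank_eq_two {a b : B.PolarVertex} (h : B.polarGraph.Adj a b)
    (ha : finrank K a.1 = 2) : finrank K b.1 = 1 ∧ b.1 ≤ a.1 := by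
  rcases ((fromRel_adj _ a b).mp h).2 with hab | hba
  · have := (finrank_eq_of_lt hab).1
    omega
  · exact ⟨(finrank_eq_of_lt hba).1, hba.le⟩

theorem exists_mem_edge_finrank_eq (e : B.polarGraph.edgeSet) {r : ℕ} (hr : r = 1 ∨ r = 2) :
    ∃ a ∈ (e : Sym2 B.PolarVertex), finrank K a.1 = r := by
  obtain ⟨e, he⟩ := e
  induction e using Sym2.ind with | _ a b => ?_
  have he : B.polarGraph.Adj a b := he
  rcases ((fromRel_adj _ a b).mp he).2 with hab | hab
  · have := finrank_eq_of_lt hab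
    rcases hr with rfl | rfl
    exacts [⟨a, Sym2.mem_mk_left a b, this.1⟩, ⟨b, Sym2.mem_mk_right a b, this.2⟩]
  · have := finrank_eq_of_lt hab
    rcases hr with rfl | rfl
    exacts [⟨b, Sym2.mem_mk_right a b, this.1⟩, ⟨a, Sym2.mem_mk_left a b, this.2⟩]

theorem eq_of_adj_of_adj {P Q L M : B.PolarVertex} (hP : finrank K P.1 = 1) (hPQ : P ≠ Q)
    (hPL : B.polarGraph.Adj P L) (hQL : B.polarGraph.Adj Q L) (hPM : B.polarGraph.Adj P M)
    (hQM : B.polarGraph.Adj Q M) : L = M := by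
  obtain ⟨hL, hPL⟩ := le_of_adj_of_finrank_eq_one hPL hP
  obtain ⟨hQ, hQL⟩ := le_of_adj_of_finrank_eq_two hQL.symm hL
  obtain ⟨hM, hPM⟩ := le_of_adj_of_finrank_eq_one hPM hP
  have hne : P.1 ≠ Q.1 := fun h => hPQ (Subtype.ext h)
  exact Subtype.ext ((sup_eq_of_finrank_eq_one hP hQ hne hPL hQL hL).symm.trans
    (sup_eq_of_finrank_eq_one hP hQ hne hPM (le_of_adj_of_finrank_eq_one hQM hQ).2 hM))

/-- Three pairwise collinear points span a totally isotropic subspace, of dimension at most 2,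
so they lie on one line. -/
theorem eq_of_triangle (hB : B.IsRefl) (hBn : B.Nondegenerate) (hV : finrank K V = 4)
    {P Q R L M N : B.PolarVertex} (hP : finrank K P.1 = 1) (hPQ : P ≠ Q) (hQR : Q ≠ R)
    (hPL : B.polarGraph.Adj P L) (hQL : B.polarGraph.Adj Q L) (hQM : B.polarGraph.Adj Q M)
    (hRM : B.polarGraph.Adj R M) (hRN : B.polarGraph.Adj R N) (hPN : B.polarGraph.Adj P N) :
    L = M := by
  obtain ⟨hL, hPL⟩ := le_of_adj_of_finrank_eq_one hPL hP
  obtain ⟨hQ, hQL⟩ := le_of_adj_of_finrank_eq_two hQL.symm hL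
  obtain ⟨hM, hQM⟩ := le_of_adj_of_finrank_eq_one hQM hQ
  obtain ⟨hR, hRM⟩ := le_of_adj_of_finrank_eq_two hRM.symm hM
  obtain ⟨hN, hRN⟩ := le_of_adj_of_finrank_eq_one hRN hR
  have hPN := (le_of_adj_of_finrank_eq_one hPN hP).2
  have hL' := sup_eq_of_finrank_eq_one hP hQ (fun h => hPQ (Subtype.ext h)) hPL hQL hL
  have hM' := sup_eq_of_finrank_eq_one hQ hR (fun h => hQR (Subtype.ext h)) hQM hRM hM
  have hRL : R.1 ≤ B.orthogonal L.1 := by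
    rw [← hL', orthogonal_sup]
    exact le_inf (hRN.trans (N.2.1.trans (orthogonal_le hPN)))
      (hRM.trans (M.2.1.trans (orthogonal_le hQM)))
  have hT := sup_le_orthogonal_sup hB L.2.1 R.2.1 hRL
  have hTrank := two_mul_finrank_le_of_le_orthogonal hBn hT
  have hLT : L.1 = L.1 ⊔ R.1 := eq_of_le_of_finrank_le le_sup_left (by omega)
  have hMT : M.1 = L.1 ⊔ R.1 := eq_of_le_of_finrank_le
    (hM' ▸ sup_le_sup_right (hL' ▸ le_sup_right) R.1) (by omega)
  exact Subtype.ext (hLT.trans hMT.symm)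

end PolarVertex

noncomputable def polarGraphColoring (B : LinearMap.BilinForm K V) : B.polarGraph.Coloring Bool :=
  Coloring.mk (fun a => decide (finrank K a.1 = 1)) fun {a b} h => by
    rcases a.2.2 with ha | ha
    · simp [ha, (PolarVertex.le_of_adj_of_finrank_eq_one h ha).1]
    · simp [ha, (PolarVertex.le_of_adj_of_finrank_eq_two h ha).1]

theorem not_cycleGraph_four_isContained_polarGraph : ¬ cycleGraph 4 ⊑ B.polarGraph := by
  rintro ⟨c⟩
  have adj (i : Fin 4) : B.polarGraph.Adj (c.toHom i) (c.toHom (i + 1)) :=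
    c.toHom.map_adj (cycleGraph_adj_add_one i)
  have ne (i j : Fin 4) (h : i ≠ j) : c.toHom i ≠ c.toHom j := c.injective.ne h
  rcases (c.toHom 0).2.2 with h0 | h0
  · exact ne 1 3 (by decide) (PolarVertex.eq_of_adj_of_adj h0 (ne 0 2 (by decide))
      (adj 0) (adj 1).symm (adj 3).symm (adj 2))
  · have h1 := (PolarVertex.le_of_adj_of_finrank_eq_two (adj 0) h0).1
    exact ne 0 2 (by decide) (PolarVertex.eq_of_adj_of_adj h1 (ne 1 3 (by decide))
      (adj 0).symm (adj 3) (adj 1) (adj 2).symm)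

theorem not_cycleGraph_six_isContained_polarGraph (hB : B.IsRefl) (hBn : B.Nondegenerate)
    (hV : finrank K V = 4) : ¬ cycleGraph 6 ⊑ B.polarGraph := by
  rintro ⟨c⟩
  have adj (i : Fin 6) : B.polarGraph.Adj (c.toHom i) (c.toHom (i + 1)) :=
    c.toHom.map_adj (cycleGraph_adj_add_one i)
  have ne (i j : Fin 6) (h : i ≠ j) : c.toHom i ≠ c.toHom j := c.injective.ne h
  rcases (c.toHom 0).2.2 with h0 | h0
  · exact ne 1 3 (by decide) (PolarVertex.eq_of_triangle hB hBn hV h0 (ne 0 2 (by decide))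
      (ne 2 4 (by decide)) (adj 0) (adj 1).symm (adj 2) (adj 3).symm (adj 4) (adj 5).symm)
  · have h1 := (PolarVertex.le_of_adj_of_finrank_eq_two (adj 0) h0).1
    exact ne 2 4 (by decide) (PolarVertex.eq_of_triangle hB hBn hV h1 (ne 1 3 (by decide))
      (ne 3 5 (by decide)) (adj 1) (adj 2).symm (adj 3) (adj 4).symm (adj 5) (adj 0).symm)

theorem le_egirth_polarGraph (hB : B.IsRefl) (hBn : B.Nondegenerate) (hV : finrank K V = 4) :
    8 ≤ B.polarGraph.egirth := by
  refine le_egirth.mpr fun a w hw => ?_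
  have h3 := hw.three_le_length
  obtain ⟨m, hm⟩ := ((polarGraphColoring B).even_length_iff_congr w).mpr Iff.rfl
  have h4 : w.length ≠ 4 := fun h => not_cycleGraph_four_isContained_polarGraph
    ((cycleGraph_isContained_iff (by norm_num)).mpr ⟨a, w, hw, h⟩)
  have h6 : w.length ≠ 6 := fun h => not_cycleGraph_six_isContained_polarGraph hB hBn hV
    ((cycleGraph_isContained_iff (by norm_num)).mpr ⟨a, w, hw, h⟩)
  exact_mod_cast (show 8 ≤ w.length by omega)

/-- Every point is collinear with some point of every line, because its orthogonal is a
hyperplane. -/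
theorem polarGraph_edist_le_three (hB : B.IsAlt) {P L : B.PolarVertex} (hP : finrank K P.1 = 1)
    (hL : finrank K L.1 = 2) : B.polarGraph.edist P L ≤ 3 := by
  obtain ⟨u, ⟨huP, huL⟩, hu0⟩ := (B.orthogonal P.1 ⊓ L.1).exists_mem_ne_zero_of_ne_bot
    (orthogonal_inf_ne_bot hB.isRefl hP hL.ge)
  by_cases hu : u ∈ P.1
  · have hPL : P.1 ≤ L.1 := eq_span_singleton_of_mem_of_finrank_eq_one hP hu hu0 ▸
      (span_singleton_le_iff_mem u L.1).mpr huL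
    rw [edist_eq_one_iff_adj.mpr (polarGraph_adj_of_le hP hL hPL)]
    norm_num
  · have hQ : finrank K (K ∙ u) = 1 := finrank_span_singleton hu0
    have hM : finrank K ↥(P.1 ⊔ K ∙ u) = 2 := by rw [finrank_sup_span_singleton hu, hP]
    let Q : B.PolarVertex := ⟨K ∙ u, hB.span_singleton_le_orthogonal u, Or.inl hQ⟩
    let M : B.PolarVertex :=
      ⟨P.1 ⊔ K ∙ u, hB.sup_span_singleton_le_orthogonal P.2.1 huP, Or.inr hM⟩
    have hPM : B.polarGraph.Adj P M := polarGraph_adj_of_le hP hM le_sup_left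
    have hQM : B.polarGraph.Adj Q M := polarGraph_adj_of_le hQ hM le_sup_right
    have hQL : B.polarGraph.Adj Q L :=
      polarGraph_adj_of_le hQ hL ((span_singleton_le_iff_mem u L.1).mpr huL)
    exact (edist_le (.cons hPM (.cons hQM.symm (.cons hQL .nil)))).trans (by norm_num)

theorem polarGraph_lineGraph_power_four_eq_top (hB : B.IsAlt) :
    B.polarGraph.lineGraph.power 4 = ⊤ := by
  ext e f
  refine ⟨fun h => h.1, fun hef => power_adj_iff_edist.mpr ⟨hef, ?_⟩⟩
  obtain ⟨P, hPe, hP⟩ := PolarVertex.exists_mem_edge_finrank_eq e (Or.inl rfl)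
  obtain ⟨L, hLf, hL⟩ := PolarVertex.exists_mem_edge_finrank_eq f (Or.inr rfl)
  calc B.polarGraph.lineGraph.edist e f ≤ B.polarGraph.edist P L + 1 :=
        lineGraph_edist_le_edist_add_one hPe hLf
    _ ≤ 3 + 1 := by gcongr; exact polarGraph_edist_le_three hB hP hL
    _ = 4 := by norm_num

variable [Finite K]

theorem ncard_neighborSet_of_finrank_eq_two {L : B.PolarVertex} (hL : finrank K L.1 = 2) :
    (B.polarGraph.neighborSet L).ncard = Nat.card K + 1 := by
  have : Finite V := Module.finite_of_finite K
  have himage : Subtype.val '' B.polarGraph.neighborSet L =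
      {W | ⊥ ≤ W ∧ W ≤ L.1 ∧ finrank K W = finrank K (⊥ : Submodule K V) + 1} := by
    ext W
    simp only [Set.mem_image, mem_neighborSet, Set.mem_ofPred_eq, finrank_bot, zero_add, bot_le,
      true_and]
    constructor
    · rintro ⟨a, h, rfl⟩
      exact (PolarVertex.le_of_adj_of_finrank_eq_two h hL).symm
    · rintro ⟨hWL, hW⟩
      exact ⟨⟨W, hWL.trans (L.2.1.trans (orthogonal_le hWL)), Or.inl hW⟩,
        (polarGraph_adj_of_le hW hL hWL).symm, rfl⟩
  rw [← Set.ncard_image_of_injective _ Subtype.val_injective, himage, ncard_covers bot_le, hL,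
    finrank_bot]
  simp [Finset.sum_range_succ, add_comm]

theorem ncard_neighborSet_of_finrank_eq_one (hB : B.IsAlt) (hBn : B.Nondegenerate)
    {P : B.PolarVertex} (hP : finrank K P.1 = 1) :
    (B.polarGraph.neighborSet P).ncard =
      ∑ i ∈ Finset.range (finrank K V - 2), Nat.card K ^ i := by
  have : Finite V := Module.finite_of_finite K
  have himage : Subtype.val '' B.polarGraph.neighborSet P =
      {W | P.1 ≤ W ∧ W ≤ B.orthogonal P.1 ∧ finrank K W = finrank K P.1 + 1} := by
    ext W
    simp only [Set.mem_image, mem_neighborSet, Set.mem_ofPred_eq]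
    constructor
    · rintro ⟨a, h, rfl⟩
      obtain ⟨ha, hPa⟩ := PolarVertex.le_of_adj_of_finrank_eq_one h hP
      exact ⟨hPa, a.2.1.trans (orthogonal_le hPa), by omega⟩
    · rintro ⟨hPW, hWP, hW⟩
      obtain ⟨u, huW, huP⟩ := SetLike.exists_of_lt (lt_of_le_of_ne hPW (by rintro rfl; omega))
      have hWu : P.1 ⊔ K ∙ u = W := eq_of_le_of_finrank_le
        (sup_le hPW ((span_singleton_le_iff_mem u W).mpr huW))
        (by rw [finrank_sup_span_singleton huP]; omega)
      have hW2 : finrank K W = 2 := by omega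
      exact ⟨⟨W, hWu ▸ hB.sup_span_singleton_le_orthogonal P.2.1 (hWP huW), Or.inr hW2⟩,
        polarGraph_adj_of_le hP hW2 hPW, rfl⟩
  rw [← Set.ncard_image_of_injective _ Subtype.val_injective, himage, ncard_covers P.2.1,
    finrank_orthogonal hBn, hP, Nat.sub_sub]

theorem ncard_neighborSet_polarGraph (hB : B.IsAlt) (hBn : B.Nondegenerate)
    (hV : finrank K V = 4) (v : B.PolarVertex) :
    (B.polarGraph.neighborSet v).ncard = Nat.card K + 1 := by
  rcases v.2.2 with hv | hv
  · rw [ncard_neighborSet_of_finrank_eq_one hB hBn hv, hV]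
    simp [Finset.sum_range_succ, add_comm]
  · exact ncard_neighborSet_of_finrank_eq_two hv

theorem ncard_setOf_finrank_eq_one (hB : B.IsAlt) :
    {a : B.PolarVertex | finrank K a.1 = 1}.ncard =
      ∑ i ∈ Finset.range (finrank K V), Nat.card K ^ i := by
  have : Finite V := Module.finite_of_finite K
  have himage : Subtype.val '' {a : B.PolarVertex | finrank K a.1 = 1} =
      {W : Submodule K V | ⊥ ≤ W ∧ W ≤ ⊤ ∧
        finrank K W = finrank K (⊥ : Submodule K V) + 1} := by
    ext W
    simp only [Set.mem_image, Set.mem_ofPred_eq, finrank_bot, zero_add, bot_le, le_top, true_and]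
    exact ⟨fun ⟨a, ha, h⟩ => h ▸ ha,
      fun hW => ⟨⟨W, hB.le_orthogonal_of_finrank_eq_one hW, Or.inl hW⟩, hW, rfl⟩⟩
  rw [← Set.ncard_image_of_injective _ Subtype.val_injective, himage, ncard_covers bot_le,
    finrank_top, finrank_bot, Nat.sub_zero]

theorem natCard_edgeSet_polarGraph (hB : B.IsAlt) (hBn : B.Nondegenerate) :
    Nat.card B.polarGraph.edgeSet = (∑ i ∈ Finset.range (finrank K V), Nat.card K ^ i) *
      ∑ i ∈ Finset.range (finrank K V - 2), Nat.card K ^ i := by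
  classical
  have : Finite V := Module.finite_of_finite K
  have := Fintype.ofFinite B.PolarVertex
  let s : Finset B.PolarVertex := {a | finrank K a.1 = 1}
  let t : Finset B.PolarVertex := {a | finrank K a.1 = 2}
  have hs : B.polarGraph.IsBipartiteWith s t := by
    refine ⟨Finset.disjoint_coe.mpr (Finset.disjoint_filter.mpr fun a _ h => by omega),
      fun a b h => ?_⟩
    simp only [s, t, Finset.coe_filter, Finset.mem_univ, true_and, Set.mem_ofPred_eq]
    rcases a.2.2 with ha | ha
    · exact Or.inl ⟨ha, (PolarVertex.le_of_adj_of_finrank_eq_one h ha).1⟩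
    · exact Or.inr ⟨ha, (PolarVertex.le_of_adj_of_finrank_eq_two h ha).1⟩
  have hdeg (a : B.PolarVertex) (ha : a ∈ s) :
      B.polarGraph.degree a = ∑ i ∈ Finset.range (finrank K V - 2), Nat.card K ^ i := by
    rw [← card_neighborSet_eq_degree, ← Nat.card_eq_fintype_card, Nat.card_coe_set_eq,
      ncard_neighborSet_of_finrank_eq_one hB hBn (Finset.mem_filter.mp ha).2]
  have hcard : #s = ∑ i ∈ Finset.range (finrank K V), Nat.card K ^ i := by
    rw [← ncard_setOf_finrank_eq_one hB, ← Set.ncard_coe_finset]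
    simp [s]
  rw [Nat.card_eq_fintype_card, ← edgeFinset_card,
    ← isBipartiteWith_sum_degrees_eq_card_edges hs, sum_congr rfl hdeg, sum_const, smul_eq_mul,
    hcard]

end LinearMap.BilinForm

theorem Pi.spanSubset_le_spanSubset_iff {R ι : Type*} [CommSemiring R] [Nontrivial R]
    [Finite ι] {s t : Set ι} : Pi.spanSubset R s ≤ Pi.spanSubset R t ↔ s ⊆ t := by
  classical
  refine ⟨fun h i hi => ?_, fun h => span_mono (Set.image_mono h)⟩
  by_contra hit
  have hmem : Pi.single i 1 ∈ Pi.spanSubset R t :=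
    h (subset_span ⟨i, hi, Pi.basisFun_apply R ι i⟩)
  simpa using Pi.mem_spanSubset_iff.mp hmem i hit

section Symplectic

open LinearMap.BilinForm SimpleGraph

variable (K : Type*) [Field K]

noncomputable def symplecticForm : LinearMap.BilinForm K (Fin 4 → K) :=
  LinearMap.mk₂ K (fun x y => x 0 * y 1 - x 1 * y 0 + x 2 * y 3 - x 3 * y 2)
    (fun _ _ _ => by simp only [Pi.add_apply]; ring)
    (fun _ _ _ => by simp only [Pi.smul_apply, smul_eq_mul]; ring)
    (fun _ _ _ => by simp only [Pi.add_apply]; ring)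
    (fun _ _ _ => by simp only [Pi.smul_apply, smul_eq_mul]; ring)

variable {K}

theorem symplecticForm_apply (x y : Fin 4 → K) :
    symplecticForm K x y = x 0 * y 1 - x 1 * y 0 + x 2 * y 3 - x 3 * y 2 := rfl

theorem isAlt_symplecticForm : (symplecticForm K).IsAlt := fun x => by
  rw [symplecticForm_apply]
  ring

theorem nondegenerate_symplecticForm : (symplecticForm K).Nondegenerate := by
  constructor <;>
  · intro x hx
    funext i
    fin_cases i
    · simpa [symplecticForm_apply, Pi.single_apply] using hx (Pi.single 1 1)
    · simpa [symplecticForm_apply, Pi.single_apply] using hx (Pi.single 0 1)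
    · simpa [symplecticForm_apply, Pi.single_apply] using hx (Pi.single 3 1)
    · simpa [symplecticForm_apply, Pi.single_apply] using hx (Pi.single 2 1)

theorem spanSubset_le_orthogonal_symplecticForm {s : Set (Fin 4)} (h01 : 0 ∉ s ∨ 1 ∉ s)
    (h23 : 2 ∉ s ∨ 3 ∉ s) :
    Pi.spanSubset K s ≤ (symplecticForm K).orthogonal (Pi.spanSubset K s) := by
  intro y hy x hx
  rw [Pi.mem_spanSubset_iff] at hx hy
  rw [symplecticForm_apply]
  rcases h01 with h | h <;> rcases h23 with h' | h' <;> simp [hx _ h, hy _ h, hx _ h', hy _ h']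

/-- The coordinate frame `e₀, e₂, e₁, e₃`, where `(e₀, e₁)` and `(e₂, e₃)` are the hyperbolic
pairs of `symplecticForm`, gives an ordinary quadrangle; these are the coordinate sets of its
points and lines. -/
def octagon : Fin 8 → Finset (Fin 4) := ![{0}, {0, 2}, {2}, {1, 2}, {1}, {1, 3}, {3}, {0, 3}]

noncomputable def octagonVertex (i : Fin 8) : (symplecticForm K).PolarVertex :=
  ⟨Pi.spanSubset K (octagon i),
    spanSubset_le_orthogonal_symplecticForm (by revert i; decide) (by revert i; decide),
    by rw [Pi.dim_spanSubset, Set.ncard_coe_finset]; revert i; decide⟩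

theorem octagonVertex_le_iff {i j : Fin 8} :
    (octagonVertex (K := K) i).1 ≤ (octagonVertex j).1 ↔ octagon i ⊆ octagon j := by
  rw [octagonVertex, octagonVertex, Pi.spanSubset_le_spanSubset_iff, Finset.coe_subset]

theorem octagonVertex_lt_iff {i j : Fin 8} :
    (octagonVertex (K := K) i).1 < (octagonVertex j).1 ↔ octagon i ⊂ octagon j := by
  rw [lt_iff_le_not_ge, octagonVertex_le_iff, octagonVertex_le_iff, ssubset_iff_subset_not_subset]

theorem cycleGraph_eight_isContained_polarGraph_symplecticForm :
    cycleGraph 8 ⊑ (symplecticForm K).polarGraph := by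
  have hadj : ∀ i j : Fin 8, (cycleGraph 8).Adj i j →
      octagon i ⊂ octagon j ∨ octagon j ⊂ octagon i := by decide
  have hinj : Function.Injective octagon := by decide
  refine ⟨⟨⟨octagonVertex, fun {i j} h => ?_⟩, fun i j h => ?_⟩⟩
  · rcases hadj i j h with hij | hij
    exacts [polarGraph_adj_of_lt (octagonVertex_lt_iff.mpr hij),
      (polarGraph_adj_of_lt (octagonVertex_lt_iff.mpr hij)).symm]
  · have h := congrArg Subtype.val h
    exact hinj ((octagonVertex_le_iff.mp h.le).antisymm (octagonVertex_le_iff.mp h.ge))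

theorem girth_polarGraph_symplecticForm : (symplecticForm K).polarGraph.girth = 8 := by
  obtain ⟨v, p, hp, hl⟩ := (cycleGraph_isContained_iff (by norm_num)).mp
    (cycleGraph_eight_isContained_polarGraph_symplecticForm (K := K))
  have hle : (symplecticForm K).polarGraph.egirth ≤ 8 := by
    simpa [hl] using egirth_le_length hp
  have hge := le_egirth_polarGraph isAlt_symplecticForm.isRefl nondegenerate_symplecticForm
    (finrank_fin_fun K)
  rw [girth, le_antisymm hle hge]
  rfl

end Symplectic

open LinearMap.BilinForm

/-- Proposition 5, second item: if `d - 1` is a prime power, there is a `d`-regular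
bipartite graph `Q` of girth 8 with `χ'_4(Q) = d⁴ - 2d³ + 2d²`. -/
theorem symplectic_quadrangle_incidence_graph_distance_colouring
    (d : ℕ) (h : ∃ p k : ℕ, p.Prime ∧ 0 < k ∧ d - 1 = p ^ k) :
    ∃ (V : Type) (_ : Fintype V) (Q : SimpleGraph V),
      (∀ v : V, (Q.neighborSet v).ncard = d) ∧ BipartiteGraph Q ∧ Q.girth = 8 ∧
      ((distChromIndex Q 4).toNat : ℤ) = (d : ℤ) ^ 4 - 2 * (d : ℤ) ^ 3 + 2 * (d : ℤ) ^ 2 := by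
  obtain ⟨p, k, hp, hk, hd⟩ := h
  have : Fact p.Prime := ⟨hp⟩
  let K := GaloisField p k
  have hq : Nat.card K + 1 = d := by
    have := Nat.one_lt_pow hk.ne' hp.one_lt
    rw [GaloisField.card p k hk.ne']
    omega
  have hB := isAlt_symplecticForm (K := K)
  have hBn := nondegenerate_symplecticForm (K := K)
  have hV : finrank K (Fin 4 → K) = 4 := finrank_fin_fun K
  refine ⟨_, Fintype.ofFinite _, (symplecticForm K).polarGraph, fun v => ?_,
    (polarGraphColoring _).bipartiteGraph, girth_polarGraph_symplecticForm, ?_⟩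
  · rw [ncard_neighborSet_polarGraph hB hBn hV, hq]
  · rw [distChromIndex, polarGraph_lineGraph_power_four_eq_top hB,
      SimpleGraph.chromaticNumber_top_eq_enat_card, ENat.card_eq_coe_natCard, ENat.toNat_natCast,
      natCard_edgeSet_polarGraph hB hBn, hV, ← hq]
    simp only [Nat.reduceSub, sum_range_succ, sum_range_zero]
    push_cast
    ring
end
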